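/- arXiv:2604.20171 — 5 statements merged into one kernel-verified Lean document; each statement's English description precedes it below -/
import Mathlib

section
/- Let $r_1, r_2, \epsilon > 0$ with $p_1 = \sqrt{\epsilon}\,\frac{2d + \sqrt{\epsilon}(r_1-r_2)}{r_1+r_2+2\epsilon}$ where $d = \sqrt{r_1r_2(r_1+r_2) + (r_1^2+r_2^2+3r_1r_2)\epsilon + 2(r_1+r_2)\epsilon^2 + \epsilon^3}$. Then there exists a constant $C > 0$ (independent of $r_1, r_2, \epsilon$) such that whenever $\epsilon \leq \min\{r_1,r_2\}/C$, one has $\left| p_1 - 2\sqrt{\frac{r_1 r_2}{r_1+r_2}}\sqrt{\epsilon} - \frac{r_1-r_2}{r_1+r_2}\epsilon \right| \leq C \frac{\epsilon^{3/2}}{\min\{r_1^{1/2}, r_2^{1/2}\}}$. -/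
lemma sqrt_sub_le_aux {u v : ℝ} (hv : 0 < v) (huv : v ≤ u) :
    Real.sqrt u - Real.sqrt v ≤ (u - v) / Real.sqrt v := by
  have hsv : 0 < Real.sqrt v := Real.sqrt_pos.mpr hv
  have hvv : Real.sqrt v ^ 2 = v := Real.sq_sqrt hv.le
  have hd : 0 ≤ (u - v) / Real.sqrt v := div_nonneg (by linarith) hsv.le
  have h1 : u ≤ (Real.sqrt v + (u - v) / Real.sqrt v) ^ 2 := by
    have hmul : Real.sqrt v * ((u - v) / Real.sqrt v) = u - v :=
      mul_div_cancel₀ _ hsv.ne'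
    nlinarith [sq_nonneg ((u - v) / Real.sqrt v)]
  have h2 := Real.sqrt_le_sqrt h1
  rw [Real.sqrt_sq (by positivity)] at h2
  linarith

/-- Asymptotic expansion of the positive fixed point `p1` in the regime
`ε ≪ min {r1, r2}`. -/
theorem stmt2 :
    ∃ C > (0 : ℝ), ∀ r1 r2 ε : ℝ, 0 < r1 → 0 < r2 → 0 < ε →
      ε ≤ min r1 r2 / C →
      |Real.sqrt ε * (2 * Real.sqrt (r1 * r2 * (r1 + r2)
            + (r1 ^ 2 + r2 ^ 2 + 3 * r1 * r2) * ε + 2 * (r1 + r2) * ε ^ 2 + ε ^ 3)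
          + Real.sqrt ε * (r1 - r2)) / (r1 + r2 + 2 * ε)
        - 2 * Real.sqrt (r1 * r2 / (r1 + r2)) * Real.sqrt ε
        - (r1 - r2) / (r1 + r2) * ε|
      ≤ C * ε ^ ((3 : ℝ) / 2) / min (Real.sqrt r1) (Real.sqrt r2) := by
  refine ⟨10, by norm_num, ?_⟩
  intro r1 r2 ε hr1 hr2 hε hC
  have hm0 : (0:ℝ) < min r1 r2 := lt_min hr1 hr2
  have hεm : ε ≤ min r1 r2 := hC.trans (by linarith)
  set m := min r1 r2 with hmdef
  have hmr1 : m ≤ r1 := min_le_left _ _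
  have hmr2 : m ≤ r2 := min_le_right _ _
  set s := r1 + r2 with hsdef
  have hs : 0 < s := by positivity
  have hs2 : 0 < s + 2 * ε := by positivity
  have hεs : ε ≤ s := by simp only [hsdef]; linarith
  set D := r1 * r2 * s + (r1 ^ 2 + r2 ^ 2 + 3 * r1 * r2) * ε + 2 * s * ε ^ 2 + ε ^ 3
    with hDdef
  have hD : 0 < D := by rw [hDdef, hsdef]; positivity
  set u := D / (s + 2 * ε) ^ 2 with hudef
  set v := r1 * r2 / s with hvdef
  have hv : 0 < v := by rw [hvdef]; positivity
  have hsv : 0 < Real.sqrt v := Real.sqrt_pos.mpr hv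
  -- u - v bounds
  have huv_eq : u - v = (s * ε * (r1 ^ 2 + r2 ^ 2 - r1 * r2)
      + 2 * (r1 ^ 2 + r2 ^ 2) * ε ^ 2 + s * ε ^ 3) / (s * (s + 2 * ε) ^ 2) := by
    rw [hudef, hvdef, hDdef]
    field_simp
    ring
  have hN0 : 0 ≤ s * ε * (r1 ^ 2 + r2 ^ 2 - r1 * r2)
      + 2 * (r1 ^ 2 + r2 ^ 2) * ε ^ 2 + s * ε ^ 3 := by
    nlinarith [sq_nonneg (r1 - r2), mul_pos hr1 hr2, mul_pos hs hε, sq_nonneg ε]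
  have huv0 : v ≤ u := by
    have := div_nonneg hN0 (by positivity : (0:ℝ) ≤ s * (s + 2 * ε) ^ 2)
    linarith [huv_eq ▸ this]
  have huv3 : u - v ≤ 3 * ε := by
    rw [huv_eq, div_le_iff₀ (by positivity)]
    simp only [hsdef]
    nlinarith [mul_pos hr1 hr2, mul_nonneg hε.le hε.le, sq_nonneg (r1 - r2),
      mul_nonneg (mul_nonneg hε.le hε.le) hε.le,
      mul_nonneg (mul_nonneg hε.le hε.le) (mul_pos hr1 hr2).le,
      mul_nonneg hε.le (mul_pos hr1 hr2).le,
      mul_le_mul_of_nonneg_left (show ε ≤ r1 + r2 by linarith)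
        (mul_nonneg hε.le hε.le)]
  -- sqrt D in terms of sqrt u
  have hDu : Real.sqrt D = Real.sqrt u * (s + 2 * ε) := by
    rw [hudef, Real.sqrt_div hD.le, Real.sqrt_sq hs2.le,
      div_mul_cancel₀ _ hs2.ne']
  set a := Real.sqrt ε with hadef
  have ha0 : 0 ≤ a := Real.sqrt_nonneg ε
  have ha2 : a * a = ε := Real.mul_self_sqrt hε.le
  have hsne : s ≠ 0 := hs.ne'
  have hs2ne : s + 2 * (a * a) ≠ 0 := by rw [ha2]; exact hs2.ne'
  clear_value m s D u v a
  -- the algebraic identity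
  have key : a * (2 * Real.sqrt D + a * (r1 - r2)) / (s + 2 * ε)
      - 2 * Real.sqrt v * a - (r1 - r2) / s * ε
      = 2 * a * (Real.sqrt u - Real.sqrt v)
        - (r1 - r2) * (2 * ε ^ 2) / (s * (s + 2 * ε)) := by
    rw [hDu, ← ha2]
    field_simp
    ring
  rw [key]
  -- piecewise bounds
  have hsub : Real.sqrt u - Real.sqrt v ≤ 3 * ε / Real.sqrt v :=
    (sqrt_sub_le_aux hv huv0).trans ((div_le_div_iff_of_pos_right hsv).mpr huv3)
  have hsub0 : 0 ≤ Real.sqrt u - Real.sqrt v :=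
    sub_nonneg.mpr (Real.sqrt_le_sqrt huv0)
  have term1 : |2 * a * (Real.sqrt u - Real.sqrt v)| ≤ 2 * a * (3 * ε / Real.sqrt v) := by
    rw [abs_of_nonneg (mul_nonneg (by positivity) hsub0)]
    exact mul_le_mul_of_nonneg_left hsub (by positivity)
  have habs : |r1 - r2| ≤ s := by
    rw [abs_le]
    constructor <;> · simp only [hsdef]; linarith
  have term2 : |(r1 - r2) * (2 * ε ^ 2) / (s * (s + 2 * ε))| ≤ 2 * ε ^ 2 / s := by
    rw [abs_div, abs_mul, abs_of_pos (show (0:ℝ) < s * (s + 2 * ε) by positivity),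
      abs_of_pos (show (0:ℝ) < 2 * ε ^ 2 by positivity),
      div_le_div_iff₀ (by positivity) hs]
    have h1 : |r1 - r2| * (2 * ε ^ 2) * s ≤ s * (2 * ε ^ 2) * s :=
      mul_le_mul_of_nonneg_right
        (mul_le_mul_of_nonneg_right habs (by positivity)) hs.le
    have h2 : (0:ℝ) ≤ ε ^ 2 * (ε * s) := by positivity
    nlinarith only [h1, h2]
  -- facts relating m, v, ε
  have hsm : 0 < Real.sqrt m := Real.sqrt_pos.mpr hm0
  have hm2 : Real.sqrt m * Real.sqrt m = m := Real.mul_self_sqrt hm0.le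
  have ham : a ≤ Real.sqrt m := hadef ▸ Real.sqrt_le_sqrt hεm
  have hms : m * s ≤ 2 * (r1 * r2) := by
    rcases le_total r1 r2 with h | h
    · rw [hmdef, min_eq_left h, hsdef]
      nlinarith only [mul_le_mul_of_nonneg_left h hr1.le, hr1, hr2]
    · rw [hmdef, min_eq_right h, hsdef]
      nlinarith only [mul_le_mul_of_nonneg_left h hr2.le, hr1, hr2]
  have hv2 : m ≤ (3 / 2 : ℝ) ^ 2 * v := by
    have e : (3 / 2 : ℝ) ^ 2 * v = 9 / 4 * (r1 * r2) / s := by rw [hvdef]; ring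
    rw [e, le_div_iff₀ hs]
    linarith only [hms, (mul_pos hr1 hr2)]
  have key2 : 2 * Real.sqrt m ≤ 3 * Real.sqrt v := by
    have h1 := Real.sqrt_le_sqrt hv2
    rw [Real.sqrt_mul (by positivity) v, Real.sqrt_sq (by norm_num)] at h1
    linarith
  have g1 : 2 * a * (3 * ε / Real.sqrt v) ≤ 9 * (ε * a) / Real.sqrt m := by
    have e1 : 2 * a * (3 * ε / Real.sqrt v) = 6 * (ε * a) / Real.sqrt v := by ring
    rw [e1, div_le_div_iff₀ hsv hsm]
    nlinarith only [mul_le_mul_of_nonneg_left key2 (show (0:ℝ) ≤ 3 * (ε * a) by positivity)]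
  have g2 : 2 * ε ^ 2 / s ≤ ε * a / Real.sqrt m := by
    rw [← ha2, div_le_div_iff₀ hs hsm]
    have h2m : 2 * m ≤ s := by simp only [hsdef]; linarith only [hmr1, hmr2]
    have hA := mul_le_mul_of_nonneg_left ham
      (show (0:ℝ) ≤ 2 * (a * a * a * Real.sqrt m) by positivity)
    have hB := mul_le_mul_of_nonneg_left h2m
      (show (0:ℝ) ≤ a * a * a by positivity)
    have hm3 : a * a * a * (Real.sqrt m * Real.sqrt m) = a * a * a * m := by
      rw [hm2]
    nlinarith only [hA, hB, hm3]
  -- final assembly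
  have hmin : min (Real.sqrt r1) (Real.sqrt r2) = Real.sqrt m := by
    rw [hmdef]
    rcases le_total r1 r2 with h | h
    · rw [min_eq_left h, min_eq_left (Real.sqrt_le_sqrt h)]
    · rw [min_eq_right h, min_eq_right (Real.sqrt_le_sqrt h)]
  have hrpow : ε ^ ((3 : ℝ) / 2) = ε * a := by
    rw [hadef, show (3 : ℝ) / 2 = 1 + 1 / 2 by norm_num, Real.rpow_add hε,
      Real.rpow_one, ← Real.sqrt_eq_rpow]
  rw [hmin, hrpow]
  calc |2 * a * (Real.sqrt u - Real.sqrt v)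
        - (r1 - r2) * (2 * ε ^ 2) / (s * (s + 2 * ε))|
      ≤ |2 * a * (Real.sqrt u - Real.sqrt v)|
          + |(r1 - r2) * (2 * ε ^ 2) / (s * (s + 2 * ε))| := abs_sub _ _
    _ ≤ 2 * a * (3 * ε / Real.sqrt v) + 2 * ε ^ 2 / s := add_le_add term1 term2
    _ ≤ 9 * (ε * a) / Real.sqrt m + ε * a / Real.sqrt m := add_le_add g1 g2
    _ = 10 * (ε * a) / Real.sqrt m := by ring
end

section
/- For $r_1, r_2 > 0$ and $\epsilon \geq 0$, define $g_j(x_1) = \epsilon$-free profile $r_j - \sqrt{r_j^2 - x_1^2}$ and $\delta(x_1) = 2\epsilon + g_1(x_1) + g_2(x_1)$ for $|x_1| < \min\{r_1,r_2\}$. Then for all $0 < |x_1| < \min\{r_1,r_2\}/2$ one has $\delta''(x_1)\,\delta(x_1) > \frac{1}{2}\,\delta'(x_1)^2$. -/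
/-!
With `s = √(r² - x²)`, a single profile `g = r - s` has `g' = x / s` and `g'' = r² / s³`, and since
`x² = (r - s)(r + s)` the inequality `g'² < 2 g'' g` reduces to `s (r + s) < 2 r²`, i.e. to `s < r`.
Two such inequalities add up by Cauchy–Schwarz, and the term `2ε` only helps because `δ'' ≥ 0`.
-/

open Filter Topology

noncomputable def diskProfile (r x : ℝ) : ℝ := r - √(r ^ 2 - x ^ 2)

lemma add_sq_lt_add_mul_add {a₁ a₂ b₁ b₂ c₁ c₂ : ℝ} (ha₁ : 0 ≤ a₁) (ha₂ : 0 ≤ a₂)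
    (h₁ : c₁ ^ 2 < a₁ * b₁) (h₂ : c₂ ^ 2 < a₂ * b₂) :
    (c₁ + c₂) ^ 2 < (a₁ + a₂) * (b₁ + b₂) := by
  have hb₁ : 0 ≤ b₁ := by nlinarith [sq_nonneg c₁]
  have hb₂ : 0 ≤ b₂ := by nlinarith [sq_nonneg c₂]
  have hprod : (2 * (c₁ * c₂)) ^ 2 ≤ (a₁ * b₂ + a₂ * b₁) ^ 2 := by
    have := mul_le_mul h₁.le h₂.le (sq_nonneg _) (by positivity)
    nlinarith [sq_nonneg (a₁ * b₂ - a₂ * b₁)]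
  have hcross := (le_abs_self _).trans (abs_le_of_sq_le_sq hprod (by positivity))
  nlinarith

section
variable {r x : ℝ}

lemma sq_lt_sq_of_abs_lt (hx : |x| < r) : x ^ 2 < r ^ 2 := by
  nlinarith [abs_nonneg x, sq_abs x]

lemma hasDerivAt_diskProfile (hx : |x| < r) :
    HasDerivAt (diskProfile r) (x / √(r ^ 2 - x ^ 2)) x := by
  have hpos : 0 < r ^ 2 - x ^ 2 := sub_pos.2 (sq_lt_sq_of_abs_lt hx)
  have h := (((hasDerivAt_pow 2 x).const_sub (r ^ 2)).sqrt hpos.ne').const_sub r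
  refine h.congr_deriv ?_
  have := (Real.sqrt_pos.2 hpos).ne'
  field_simp
  ring

lemma deriv_diskProfile_eventuallyEq (hx : |x| < r) :
    deriv (diskProfile r) =ᶠ[𝓝 x] fun y ↦ y / √(r ^ 2 - y ^ 2) := by
  filter_upwards [(isOpen_lt continuous_abs continuous_const).mem_nhds hx] with y hy
  exact (hasDerivAt_diskProfile hy).deriv

lemma hasDerivAt_deriv_diskProfile (hx : |x| < r) :
    HasDerivAt (deriv (diskProfile r)) (r ^ 2 / √(r ^ 2 - x ^ 2) ^ 3) x := by
  have hpos : 0 < r ^ 2 - x ^ 2 := sub_pos.2 (sq_lt_sq_of_abs_lt hx)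
  have hs := Real.sqrt_pos.2 hpos
  have hsq := Real.sq_sqrt hpos.le
  have h := (hasDerivAt_id' x).div
    (((hasDerivAt_pow 2 x).const_sub (r ^ 2)).sqrt hpos.ne') hs.ne'
  rw [(deriv_diskProfile_eventuallyEq hx).hasDerivAt_iff]
  refine h.congr_deriv ?_
  field_simp
  linear_combination 2 * hsq

lemma deriv_deriv_diskProfile_nonneg (hx : |x| < r) : 0 ≤ deriv (deriv (diskProfile r)) x := by
  rw [(hasDerivAt_deriv_diskProfile hx).deriv]
  positivity

lemma sq_deriv_diskProfile_lt (hx₀ : x ≠ 0) (hx : |x| < r) :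
    deriv (diskProfile r) x ^ 2 < 2 * deriv (deriv (diskProfile r)) x * diskProfile r x := by
  have hr : 0 < r := (abs_nonneg x).trans_lt hx
  have hpos : 0 < r ^ 2 - x ^ 2 := sub_pos.2 (sq_lt_sq_of_abs_lt hx)
  rw [(hasDerivAt_deriv_diskProfile hx).deriv, (hasDerivAt_diskProfile hx).deriv, diskProfile]
  set s := √(r ^ 2 - x ^ 2)
  have hs : 0 < s := Real.sqrt_pos.2 hpos
  have hsq : s ^ 2 = r ^ 2 - x ^ 2 := Real.sq_sqrt hpos.le
  have hsr : s < r := (Real.sqrt_lt' hr).2 (sub_lt_self _ (by positivity))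
  have hx2 : x ^ 2 = (r - s) * (r + s) := by linear_combination hsq
  have hrhs : 2 * (r ^ 2 / s ^ 3) * (r - s) = (r - s) * (2 * r ^ 2 / s) / s ^ 2 := by
    field_simp
  rw [div_pow, hrhs, hx2, div_lt_div_iff_of_pos_right (by positivity),
    mul_lt_mul_iff_right₀ (sub_pos.2 hsr), lt_div_iff₀ hs]
  nlinarith

end

theorem stmt7_general (r1 r2 ε : ℝ) (hε : 0 ≤ ε)
    (δ : ℝ → ℝ)
    (hδ : ∀ x, δ x = 2 * ε + (r1 - Real.sqrt (r1 ^ 2 - x ^ 2))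
      + (r2 - Real.sqrt (r2 ^ 2 - x ^ 2))) :
    ∀ x : ℝ, 0 < |x| → |x| < min r1 r2 / 2 →
      deriv (deriv δ) x * δ x > (1 / 2) * (deriv δ x) ^ 2 := by
  intro x hx₀ hx
  have hx₁ : |x| < r1 := by linarith [min_le_left r1 r2]
  have hx₂ : |x| < r2 := by linarith [min_le_right r1 r2]
  have hδ' : δ = fun y ↦ 2 * ε + diskProfile r1 y + diskProfile r2 y := funext hδ
  have hDδ : deriv δ =ᶠ[𝓝 x] fun y ↦ deriv (diskProfile r1) y + deriv (diskProfile r2) y := by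
    filter_upwards [(isOpen_lt continuous_abs continuous_const).mem_nhds hx₁,
      (isOpen_lt continuous_abs continuous_const).mem_nhds hx₂] with y hy₁ hy₂
    rw [hδ']
    exact ((((hasDerivAt_diskProfile hy₁).differentiableAt.hasDerivAt).const_add _).add
      (hasDerivAt_diskProfile hy₂).differentiableAt.hasDerivAt).deriv
  rw [hDδ.deriv_eq, hDδ.eq_of_nhds, hδ', deriv_fun_add
    (hasDerivAt_deriv_diskProfile hx₁).differentiableAt
    (hasDerivAt_deriv_diskProfile hx₂).differentiableAt]
  have hx₀' : x ≠ 0 := abs_pos.1 hx₀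
  have key := add_sq_lt_add_mul_add (by linarith [deriv_deriv_diskProfile_nonneg hx₁])
    (by linarith [deriv_deriv_diskProfile_nonneg hx₂])
    (sq_deriv_diskProfile_lt hx₀' hx₁) (sq_deriv_diskProfile_lt hx₀' hx₂)
  nlinarith [mul_nonneg (add_nonneg (deriv_deriv_diskProfile_nonneg hx₁)
    (deriv_deriv_diskProfile_nonneg hx₂)) hε]

/-- The gap width `δ` between two nearly touching disks satisfies
`δ'' δ > (1/2) (δ')^2` away from the contact point. -/
theorem stmt7 (r1 r2 ε : ℝ) (hr1 : 0 < r1) (hr2 : 0 < r2) (hε : 0 ≤ ε)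
    (δ : ℝ → ℝ)
    (hδ : ∀ x, δ x = 2 * ε + (r1 - Real.sqrt (r1 ^ 2 - x ^ 2))
      + (r2 - Real.sqrt (r2 ^ 2 - x ^ 2))) :
    ∀ x : ℝ, 0 < |x| → |x| < min r1 r2 / 2 →
      deriv (deriv δ) x * δ x > (1 / 2) * (deriv δ x) ^ 2 :=
  stmt7_general r1 r2 ε hε δ hδ
end

section
/- Let $r_1, r_2 > 0$, $\epsilon > 0$, $r_0 = \min\{r_1,r_2\}/2$, $g_j(x_1) = r_j - \sqrt{r_j^2 - x_1^2}$, $\delta(x_1) = 2\epsilon + g_1(x_1) + g_2(x_1)$, and $\tilde u(\mathbf{x}) = (\lambda_1 - \lambda_2)\frac{x_2+\epsilon+g_2(x_1)}{\delta(x_1)} + \lambda_2$ on $\Omega_{r_0} = \{(x_1,x_2) : |x_1| < r_0,\ -\epsilon - g_2(x_1) < x_2 < \epsilon + g_1(x_1)\}$. Then there is a constant $C$ independent of $r_1, r_2, \epsilon, \lambda_1, \lambda_2$ such that $\int_{\Omega_{r_0}}|\partial_{x_1}\tilde u|^2\,d\mathbf{x} \leq C\,\frac{r_0}{\min\{r_1,r_2\}}\,|\lambda_1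 - \lambda_2|^2$. -/
/-!
With `g_j = capHeight r_j`, `g_j' = capSlope r_j` and `δ = gap r₁ r₂ ε`: on each vertical
fibre the numerator `x₂ + ε + g₂` lies in `[0, δ]` and `g₂'` has the sign of `δ'`, so
`|∂₁ũ| ≤ 2 |λ₁ - λ₂| |δ'| / δ`; integrating over the fibre of length `δ` leaves
`4 |λ₁ - λ₂|² (δ')² / δ`. For `|x₁| ≤ r_j / 2` one has `(g_j')² ≤ (4/3) x₁² / r_j² ≤ 3 g_j / r_j`,
hence `(δ')² min{r₁, r₂} ≤ 6 δ`, and the remaining integral over `|x₁| < r₀` is at most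
`24 |λ₁ - λ₂|² r₀ / min{r₁, r₂}`.
-/

open MeasureTheory Set

theorem lintegral_regionBetween_comp_fst {α : Type*} [MeasurableSpace α] {μ : Measure α}
    [SFinite μ] {f g : α → ℝ} {s : Set α} {G : α → ENNReal} (hf : Measurable f)
    (hg : Measurable g) (hs : MeasurableSet s) (hG : Measurable G) :
    ∫⁻ p in regionBetween f g s, G p.1 ∂μ.prod volume
      = ∫⁻ x in s, G x * ENNReal.ofReal (g x - f x) ∂μ := by
  rw [← withDensity_apply _ (measurableSet_regionBetween hf hg hs), ← prod_withDensity_left hG,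
    volume_regionBetween_eq_lintegral' hf hg hs,
    setLIntegral_withDensity_eq_setLIntegral_mul _ hG (by fun_prop) hs]
  rfl

theorem sq_deriv_mul_div_add_le {N D : ℝ → ℝ} {n d c c' t : ℝ} (hN : HasDerivAt N n t)
    (hD : HasDerivAt D d t) (hD0 : 0 < D t) (hN0 : 0 ≤ N t) (hND : N t ≤ D t)
    (hnd : |n| ≤ |d|) :
    deriv (fun s => c * (N s / D s) + c') t ^ 2 ≤ 4 * c ^ 2 * d ^ 2 / D t ^ 2 := by
  rw [((hN.fun_div hD hD0.ne').const_mul c |>.add_const c').deriv]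
  have hnum : |n * D t - N t * d| ≤ 2 * D t * |d| := calc
    |n * D t - N t * d| ≤ |n| * D t + N t * |d| := by
      simpa [abs_mul, abs_of_pos hD0, abs_of_nonneg hN0] using abs_sub (n * D t) (N t * d)
    _ ≤ |d| * D t + D t * |d| := by gcongr
    _ = 2 * D t * |d| := by ring
  have hsq : (n * D t - N t * d) ^ 2 ≤ (2 * D t * d) ^ 2 :=
    sq_le_sq.2 (by simpa [abs_mul, abs_of_pos hD0] using hnum)
  calc (c * ((n * D t - N t * d) / D t ^ 2)) ^ 2
      = c ^ 2 * (n * D t - N t * d) ^ 2 / D t ^ 4 := by ring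
    _ ≤ c ^ 2 * (2 * D t * d) ^ 2 / D t ^ 4 := by gcongr
    _ = 4 * c ^ 2 * d ^ 2 / D t ^ 2 := by field_simp; ring

namespace TwoDiskGap

noncomputable def capHeight (r t : ℝ) : ℝ := r - √(r ^ 2 - t ^ 2)

noncomputable def capSlope (r t : ℝ) : ℝ := t / √(r ^ 2 - t ^ 2)

noncomputable def gap (r1 r2 ε t : ℝ) : ℝ := 2 * ε + capHeight r1 t + capHeight r2 t

/-- The paper's `ũ` with `c = λ₁ - λ₂` and `c' = λ₂`. -/
noncomputable def auxFun (r1 r2 ε c c' x y : ℝ) : ℝ :=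
  c * ((y + ε + capHeight r2 x) / gap r1 r2 ε x) + c'

/-- The paper's `Ω_{r₀}`. -/
def gapRegion (r1 r2 ε : ℝ) : Set (ℝ × ℝ) :=
  regionBetween (fun x => -ε - capHeight r2 x) (fun x => ε + capHeight r1 x)
    (Ioo (-(min r1 r2 / 2)) (min r1 r2 / 2))

variable {r r1 r2 ε t : ℝ}

theorem hasDerivAt_capHeight (h : t ^ 2 < r ^ 2) : HasDerivAt (capHeight r) (capSlope r t) t := by
  have hpos : 0 < r ^ 2 - t ^ 2 := by linarith
  have := ((hasDerivAt_pow 2 t).const_sub (r ^ 2)).sqrt hpos.ne' |>.const_sub r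
  refine this.congr_deriv ?_
  simp only [capSlope]
  field_simp
  norm_num

@[fun_prop]
theorem measurable_capHeight (r : ℝ) : Measurable (capHeight r) := by
  unfold capHeight; fun_prop

theorem capHeight_nonneg (hr : 0 ≤ r) (t : ℝ) : 0 ≤ capHeight r t := by
  have : √(r ^ 2 - t ^ 2) ≤ r :=
    Real.sqrt_le_sqrt (by nlinarith [sq_nonneg t] : r ^ 2 - t ^ 2 ≤ r ^ 2)
      |>.trans_eq (Real.sqrt_sq hr)
  simp only [capHeight]; linarith

theorem gap_pos (hr1 : 0 ≤ r1) (hr2 : 0 ≤ r2) (hε : 0 < ε) (t : ℝ) : 0 < gap r1 r2 ε t := by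
  have := capHeight_nonneg hr1 t
  have := capHeight_nonneg hr2 t
  simp only [gap]; linarith

theorem hasDerivAt_gap (h1 : t ^ 2 < r1 ^ 2) (h2 : t ^ 2 < r2 ^ 2) :
    HasDerivAt (gap r1 r2 ε) (capSlope r1 t + capSlope r2 t) t :=
  ((hasDerivAt_capHeight h1).const_add (2 * ε)).add (hasDerivAt_capHeight h2)

theorem abs_capSlope_le_abs_add (r1 r2 t : ℝ) :
    |capSlope r2 t| ≤ |capSlope r1 t + capSlope r2 t| := by
  have hsame : 0 ≤ capSlope r1 t ∧ 0 ≤ capSlope r2 t ∨ capSlope r1 t ≤ 0 ∧ capSlope r2 t ≤ 0 := by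
    rcases le_total 0 t with ht | ht
    · exact .inl ⟨by unfold capSlope; positivity, by unfold capSlope; positivity⟩
    · exact .inr ⟨div_nonpos_of_nonpos_of_nonneg ht (Real.sqrt_nonneg _),
        div_nonpos_of_nonpos_of_nonneg ht (Real.sqrt_nonneg _)⟩
  rw [(abs_add_eq_add_abs_iff _ _).2 hsame]
  exact le_add_of_nonneg_left (abs_nonneg _)

theorem capSlope_sq_mul_le (hr : 0 < r) (h : 4 * t ^ 2 ≤ r ^ 2) :
    capSlope r t ^ 2 * r ≤ 3 * capHeight r t := by
  set s := √(r ^ 2 - t ^ 2) with hs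
  have hs2 : s ^ 2 = r ^ 2 - t ^ 2 := Real.sq_sqrt (by nlinarith)
  have hslope : capSlope r t ^ 2 * r * s ^ 2 = t ^ 2 * r := by
    have : 0 < s := Real.sqrt_pos.2 (by nlinarith)
    simp only [capSlope, ← hs]; field_simp
  have hheight : t ^ 2 ≤ 2 * r * capHeight r t := by
    simp only [capHeight, ← hs]; nlinarith
  have hA : capSlope r t ^ 2 * r * (3 * r ^ 2) ≤ capSlope r t ^ 2 * r * (4 * s ^ 2) :=
    mul_le_mul_of_nonneg_left (by nlinarith) (by positivity)
  nlinarith [sq_nonneg (capSlope r t), mul_pos hr hr]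

theorem gapSlope_sq_mul_min_le (hr1 : 0 < r1) (hr2 : 0 < r2) (hε : 0 ≤ ε)
    (h1 : 4 * t ^ 2 ≤ r1 ^ 2) (h2 : 4 * t ^ 2 ≤ r2 ^ 2) :
    (capSlope r1 t + capSlope r2 t) ^ 2 * min r1 r2 ≤ 6 * gap r1 r2 ε t := by
  have hm := lt_min hr1 hr2
  have e1 : capSlope r1 t ^ 2 * min r1 r2 ≤ 3 * capHeight r1 t :=
    (mul_le_mul_of_nonneg_left (min_le_left _ _) (sq_nonneg _)).trans (capSlope_sq_mul_le hr1 h1)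
  have e2 : capSlope r2 t ^ 2 * min r1 r2 ≤ 3 * capHeight r2 t :=
    (mul_le_mul_of_nonneg_left (min_le_right _ _) (sq_nonneg _)).trans (capSlope_sq_mul_le hr2 h2)
  simp only [gap]
  nlinarith [mul_nonneg (sq_nonneg (capSlope r1 t - capSlope r2 t)) hm.le]

theorem sq_deriv_auxFun_le (hr1 : 0 < r1) (hr2 : 0 < r2) (hε : 0 < ε) (h1 : 4 * t ^ 2 ≤ r1 ^ 2)
    (h2 : 4 * t ^ 2 ≤ r2 ^ 2) {y : ℝ} (hlow : -ε - capHeight r2 t < y)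
    (hup : y < ε + capHeight r1 t) (c c' : ℝ) :
    deriv (auxFun r1 r2 ε c c' · y) t ^ 2 ≤ 24 * c ^ 2 / (min r1 r2 * gap r1 r2 ε t) := by
  have hD := gap_pos hr1.le hr2.le hε t
  have hm := lt_min hr1 hr2
  have hslope := gapSlope_sq_mul_min_le hr1 hr2 hε.le h1 h2
  have hN := (hasDerivAt_capHeight (r := r2) (t := t) (by nlinarith)).const_add (y + ε)
  refine (sq_deriv_mul_div_add_le hN (hasDerivAt_gap (by nlinarith) (by nlinarith)) hD
    (by linarith) (by simp only [gap]; linarith) (abs_capSlope_le_abs_add r1 r2 t)).trans ?_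
  rw [div_le_div_iff₀ (by positivity) (by positivity)]
  have := mul_le_mul_of_nonneg_left hslope (by positivity : 0 ≤ 4 * c ^ 2 * gap r1 r2 ε t)
  linarith

theorem lintegral_sq_deriv_auxFun_le (hr1 : 0 < r1) (hr2 : 0 < r2) (hε : 0 < ε) (c c' : ℝ) :
    ∫⁻ q in gapRegion r1 r2 ε, ENNReal.ofReal (deriv (auxFun r1 r2 ε c c' · q.2) q.1 ^ 2)
      ≤ ENNReal.ofReal (24 * c ^ 2) := by
  set m := min r1 r2
  have hm : 0 < m := lt_min hr1 hr2
  have hsmall : ∀ x ∈ Ioo (-(m / 2)) (m / 2), 4 * x ^ 2 ≤ r1 ^ 2 ∧ 4 * x ^ 2 ≤ r2 ^ 2 := by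
    rintro x ⟨hx₁, hx₂⟩
    have := min_le_left r1 r2
    have := min_le_right r1 r2
    constructor <;> nlinarith
  have hG : Measurable fun x => ENNReal.ofReal (24 * c ^ 2 / (m * gap r1 r2 ε x)) := by
    unfold gap; fun_prop
  have hfiber : ∀ x ∈ Ioo (-(m / 2)) (m / 2),
      ENNReal.ofReal (24 * c ^ 2 / (m * gap r1 r2 ε x))
        * ENNReal.ofReal (ε + capHeight r1 x - (-ε - capHeight r2 x))
      = ENNReal.ofReal (24 * c ^ 2 / m) := by
    intro x _
    have := gap_pos hr1.le hr2.le hε x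
    rw [← ENNReal.ofReal_mul (by positivity)]
    congr 1
    simp only [gap] at this ⊢
    field_simp
    ring
  rw [gapRegion, Measure.volume_eq_prod]
  calc _ ≤ ∫⁻ q in regionBetween (fun x => -ε - capHeight r2 x) (fun x => ε + capHeight r1 x)
          (Ioo (-(m / 2)) (m / 2)),
            ENNReal.ofReal (24 * c ^ 2 / (m * gap r1 r2 ε q.1)) ∂volume.prod volume := by
        refine setLIntegral_mono' (measurableSet_regionBetween (by fun_prop) (by fun_prop)
          measurableSet_Ioo) fun q ⟨hx, hlow, hup⟩ => ENNReal.ofReal_le_ofReal ?_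
        exact sq_deriv_auxFun_le hr1 hr2 hε (hsmall _ hx).1 (hsmall _ hx).2 hlow hup c c'
    _ = ∫⁻ x in Ioo (-(m / 2)) (m / 2), ENNReal.ofReal (24 * c ^ 2 / m) :=
        (lintegral_regionBetween_comp_fst (by fun_prop) (by fun_prop) measurableSet_Ioo hG).trans
          (setLIntegral_congr_fun measurableSet_Ioo hfiber)
    _ = ENNReal.ofReal (24 * c ^ 2) := by
        rw [setLIntegral_const, Real.volume_Ioo, ← ENNReal.ofReal_mul (by positivity)]
        congr 1
        field_simp
        ring

theorem integral_sq_deriv_auxFun_le (hr1 : 0 < r1) (hr2 : 0 < r2) (hε : 0 < ε) (c c' : ℝ) :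
    ∫ q in {q : ℝ × ℝ | |q.1| < min r1 r2 / 2 ∧ -ε - capHeight r2 q.1 < q.2 ∧
        q.2 < ε + capHeight r1 q.1}, deriv (auxFun r1 r2 ε c c' · q.2) q.1 ^ 2
      ≤ 24 * c ^ 2 := by
  have hΩ : {q : ℝ × ℝ | |q.1| < min r1 r2 / 2 ∧ -ε - capHeight r2 q.1 < q.2 ∧
      q.2 < ε + capHeight r1 q.1} = gapRegion r1 r2 ε := by
    ext; simp [gapRegion, regionBetween, abs_lt]
  rw [hΩ]
  refine (Real.le_norm_self _).trans <| (norm_integral_le_lintegral_norm _).trans ?_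
  simp only [norm_pow, Real.norm_eq_abs, sq_abs]
  exact ENNReal.toReal_le_of_le_ofReal (by positivity) (lintegral_sq_deriv_auxFun_le hr1 hr2 hε c c')
end TwoDiskGap

/-- The horizontal derivative of the singular auxiliary function
`ũ = (λ1 - λ2) (x2 + ε + g2)/δ + λ2` satisfies
`∫_{Ω_{r0}} |∂_{x1} ũ|² ≤ C (r0 / min{r1,r2}) |λ1 - λ2|²` with `C` independent
of `r1, r2, ε, λ1, λ2`. -/
theorem stmt16 :
    ∃ C > (0 : ℝ), ∀ r1 r2 ε lam1 lam2 : ℝ, 0 < r1 → 0 < r2 → 0 < ε →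
      (∫ q in {q : ℝ × ℝ | |q.1| < min r1 r2 / 2 ∧
          -ε - (r2 - Real.sqrt (r2 ^ 2 - q.1 ^ 2)) < q.2 ∧
          q.2 < ε + (r1 - Real.sqrt (r1 ^ 2 - q.1 ^ 2))},
        (deriv (fun t : ℝ =>
          (lam1 - lam2) * ((q.2 + ε + (r2 - Real.sqrt (r2 ^ 2 - t ^ 2))) /
            (2 * ε + (r1 - Real.sqrt (r1 ^ 2 - t ^ 2))
              + (r2 - Real.sqrt (r2 ^ 2 - t ^ 2)))) + lam2) q.1) ^ 2)
      ≤ C * ((min r1 r2 / 2) / min r1 r2) * |lam1 - lam2| ^ 2 := by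
  refine ⟨48, by norm_num, fun r1 r2 ε lam1 lam2 hr1 hr2 hε => ?_⟩
  have hm : 0 < min r1 r2 := lt_min hr1 hr2
  have hC : 48 * (min r1 r2 / 2 / min r1 r2) * |lam1 - lam2| ^ 2 = 24 * (lam1 - lam2) ^ 2 := by
    rw [sq_abs]; field_simp; ring
  rw [hC]
  exact TwoDiskGap.integral_sq_deriv_auxFun_le hr1 hr2 hε (lam1 - lam2) lam2
end

section
/- Let $r_1, r_2 > 0$ and $\epsilon > 0$, and let $d = \sqrt{r_1r_2(r_1+r_2) + (r_1^2+r_2^2+3r_1r_2)\epsilon + 2(r_1+r_2)\epsilon^2 + \epsilon^3}$. Suppose $\min\{r_1,r_2\} \leq M\epsilon$ for some constant $M \geq 1$. Then there exist constants $c, C > 0$ depending only on $M$ such that $c\,\sqrt{\epsilon}\,\max\{r_1,r_2,\epsilon\} \leq d \leq C\,\sqrt{\epsilon}\,\max\{r_1,r_2,\epsilon\}$. -/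
/-- Two-sided estimate `d ∼ √ε · max {r1, r2, ε}` for the discriminant quantity
`d` in the regime `min {r1, r2} ≤ M ε`. -/
theorem stmt18 (M : ℝ) (hM : 1 ≤ M) :
    ∃ c > (0 : ℝ), ∃ C > (0 : ℝ), ∀ r1 r2 ε : ℝ, 0 < r1 → 0 < r2 → 0 < ε →
      min r1 r2 ≤ M * ε →
      c * (Real.sqrt ε * max (max r1 r2) ε)
          ≤ Real.sqrt (r1 * r2 * (r1 + r2) + (r1 ^ 2 + r2 ^ 2 + 3 * r1 * r2) * ε
            + 2 * (r1 + r2) * ε ^ 2 + ε ^ 3) ∧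
      Real.sqrt (r1 * r2 * (r1 + r2) + (r1 ^ 2 + r2 ^ 2 + 3 * r1 * r2) * ε
            + 2 * (r1 + r2) * ε ^ 2 + ε ^ 3)
          ≤ C * (Real.sqrt ε * max (max r1 r2) ε) := by
  refine ⟨1, one_pos, Real.sqrt (2 * M + 10), Real.sqrt_pos.2 (by linarith), ?_⟩
  intro r1 r2 ε h1 h2 hε hmin
  set m : ℝ := max (max r1 r2) ε with hm
  have hr1m : r1 ≤ m := le_trans (le_max_left _ _) (le_max_left _ _)
  have hr2m : r2 ≤ m := le_trans (le_max_right _ _) (le_max_left _ _)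
  have hεm : ε ≤ m := le_max_right _ _
  have hmpos : 0 < m := lt_of_lt_of_le hε hεm
  have hm2 : m ^ 2 ≤ r1 ^ 2 + r2 ^ 2 + ε ^ 2 := by
    rcases max_cases (max r1 r2) ε with ⟨h, _⟩ | ⟨h, _⟩
    · rcases max_cases r1 r2 with ⟨h', _⟩ | ⟨h', _⟩ <;> rw [hm, h, h'] <;> nlinarith
    · rw [hm, h]; nlinarith
  set S : ℝ := r1 * r2 * (r1 + r2) + (r1 ^ 2 + r2 ^ 2 + 3 * r1 * r2) * ε
      + 2 * (r1 + r2) * ε ^ 2 + ε ^ 3 with hS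
  have hlow : ε * m ^ 2 ≤ S := by
    have h' : m ^ 2 * ε ≤ (r1 ^ 2 + r2 ^ 2 + ε ^ 2) * ε :=
      mul_le_mul_of_nonneg_right hm2 hε.le
    rw [hS]; nlinarith [mul_pos h1 h2, mul_pos (mul_pos h1 h2) (add_pos h1 h2),
      mul_pos h1 hε, mul_pos h2 hε, mul_pos (add_pos h1 h2) (mul_pos hε hε)]
  have hhigh : S ≤ (2 * M + 10) * (ε * m ^ 2) := by
    have hmin' : r1 * r2 * (r1 + r2) ≤ M * ε * m * (2 * m) := by
      rcases le_total r1 r2 with h | h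
      · have : min r1 r2 = r1 := min_eq_left h
        rw [this] at hmin
        have h' : r1 * (r2 * (r1 + r2)) ≤ (M * ε) * (m * (2 * m)) :=
          mul_le_mul hmin (mul_le_mul hr2m (by linarith) (by positivity) hmpos.le)
            (by positivity) (by nlinarith)
        linarith [h']
      · have : min r1 r2 = r2 := min_eq_right h
        rw [this] at hmin
        have h' : r2 * (r1 * (r1 + r2)) ≤ (M * ε) * (m * (2 * m)) :=
          mul_le_mul hmin (mul_le_mul hr1m (by linarith) (by positivity) hmpos.le)
            (by positivity) (by nlinarith)
        nlinarith [h']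
    have e1 : r1 * r2 * ε ≤ m * m * ε :=
      mul_le_mul_of_nonneg_right (mul_le_mul hr1m hr2m h2.le hmpos.le) hε.le
    have e2 : r1 * r1 * ε ≤ m * m * ε :=
      mul_le_mul_of_nonneg_right (mul_le_mul hr1m hr1m h1.le hmpos.le) hε.le
    have e3 : r2 * r2 * ε ≤ m * m * ε :=
      mul_le_mul_of_nonneg_right (mul_le_mul hr2m hr2m h2.le hmpos.le) hε.le
    have e4 : ε * ε * ε ≤ m * m * ε :=
      mul_le_mul_of_nonneg_right (mul_le_mul hεm hεm hε.le hmpos.le) hε.le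
    have e5 : r1 * ε * ε ≤ m * m * ε :=
      mul_le_mul_of_nonneg_right (mul_le_mul hr1m hεm hε.le hmpos.le) hε.le
    have e6 : r2 * ε * ε ≤ m * m * ε :=
      mul_le_mul_of_nonneg_right (mul_le_mul hr2m hεm hε.le hmpos.le) hε.le
    rw [hS]; nlinarith [hmin', e1, e2, e3, e4, e5, e6]
  have hsqm : Real.sqrt (ε * m ^ 2) = Real.sqrt ε * m := by
    rw [Real.sqrt_mul hε.le, Real.sqrt_sq hmpos.le]
  constructor
  · rw [one_mul, ← hsqm]
    exact Real.sqrt_le_sqrt hlow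
  · calc Real.sqrt S ≤ Real.sqrt ((2 * M + 10) * (ε * m ^ 2)) := Real.sqrt_le_sqrt hhigh
      _ = Real.sqrt (2 * M + 10) * (Real.sqrt ε * m) := by
          rw [Real.sqrt_mul (by linarith), hsqm]
end

section
/- Let $r_1, r_2, \epsilon > 0$ with $\min\{r_1,r_2\} \leq M\epsilon$ for a constant $M \geq 1$, and let $p_1 = \sqrt{\epsilon}\frac{2d+\sqrt{\epsilon}(r_1-r_2)}{r_1+r_2+2\epsilon}$, $p_2 = -\sqrt{\epsilon}\frac{2d-\sqrt{\epsilon}(r_1-r_2)}{r_1+r_2+2\epsilon}$ with $d$ as in the fixed-point quadratic. Then there exist constants $c, C > 0$ depending only on $M$ such that $c\epsilon \leq p_1 \leq C\epsilon$ and $c\epsilon \leq -p_2 \leq C\epsilon$. -/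
private lemma core19 (M r1 r2 ε t u : ℝ) (hM : 1 ≤ M) (h1 : 0 < r1) (h2 : 0 < r2)
    (hε : 0 < ε) (hmin : min r1 r2 ≤ M * ε) (ht : 0 ≤ t) (hu : 0 < u)
    (hu2 : u ^ 2 = ε) (ht2 : t ^ 2 = (r1 + ε) * (r2 + ε) * (r1 + r2 + ε)) :
    1/5 * ε ≤ u * (2 * t + u * (r1 - r2)) / (r1 + r2 + 2 * ε) ∧
    u * (2 * t + u * (r1 - r2)) / (r1 + r2 + 2 * ε) ≤ 3 * (M + 1) * ε := by
  have hs : 0 < r1 + r2 + 2 * ε := by linarith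
  -- upper bound on u * t
  have hab : (r1 + ε) * (r2 + ε) ≤ (M + 1) * ε * (r1 + r2 + 2 * ε) := by
    rcases min_le_iff.mp hmin with h | h
    · nlinarith [mul_pos h2 hε, mul_pos hε hε]
    · nlinarith [mul_pos h1 hε, mul_pos hε hε]
  have hut : u * t ≤ (M + 1) * ε * (r1 + r2 + 2 * ε) := by
    have h5 : ε * (r1 + r2 + ε) ≤ (M + 1) * ε * (r1 + r2 + 2 * ε) := by
      nlinarith [mul_pos hε hs]
    have hsq : (u * t) ^ 2 ≤ ((M + 1) * ε * (r1 + r2 + 2 * ε)) ^ 2 := by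
      calc (u * t) ^ 2 = ((r1 + ε) * (r2 + ε)) * (ε * (r1 + r2 + ε)) := by
            rw [mul_pow, hu2, ht2]; ring
        _ ≤ ((M + 1) * ε * (r1 + r2 + 2 * ε)) * ((M + 1) * ε * (r1 + r2 + 2 * ε)) :=
            mul_le_mul hab h5 (by positivity) (by positivity)
        _ = ((M + 1) * ε * (r1 + r2 + 2 * ε)) ^ 2 := by ring
    nlinarith [mul_nonneg hu.le ht,
      mul_pos (mul_pos (by linarith : (0:ℝ) < M + 1) hε) hs]
  -- lower bound on 2 u t + ε (r1 - r2)
  have hlow : 1/5 * ε * (r1 + r2 + 2 * ε) ≤ 2 * (u * t) + ε * (r1 - r2) := by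
    have h2ut : (2 * (u * t)) ^ 2 = 4 * (ε * ((r1 + ε) * (r2 + ε) * (r1 + r2 + ε))) := by
      rw [mul_pow, mul_pow, hu2, ht2]; ring
    rcases le_total r2 r1 with hcase | hcase
    · -- r2 ≤ r1 : show  ε s ≤ 2 u t
      have hx : (0:ℝ) ≤ r1 - r2 := by linarith
      have h4 : ε * (r1 + r2 + 2 * ε) ≤ 2 * (u * t) := by
        have hsq : (ε * (r1 + r2 + 2 * ε)) ^ 2 ≤ (2 * (u * t)) ^ 2 := by
          rw [h2ut]
          linarith [mul_nonneg (mul_nonneg (mul_nonneg h2.le hε.le) hε.le) hε.le,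
            mul_nonneg (mul_nonneg (mul_nonneg h2.le h2.le) hε.le) hε.le,
            mul_nonneg (mul_nonneg (mul_nonneg h2.le h2.le) h2.le) hε.le,
            mul_nonneg (mul_nonneg (mul_nonneg hx hε.le) hε.le) hε.le,
            mul_nonneg (mul_nonneg (mul_nonneg hx h2.le) hε.le) hε.le,
            mul_nonneg (mul_nonneg (mul_nonneg hx h2.le) h2.le) hε.le,
            mul_nonneg (mul_nonneg (mul_nonneg hx hx) hε.le) hε.le,
            mul_nonneg (mul_nonneg (mul_nonneg hx hx) h2.le) hε.le]
        nlinarith [mul_nonneg hu.le ht, mul_pos hε hs]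
      nlinarith [mul_nonneg hε.le hx, mul_pos hε hs]
    · -- r1 ≤ r2 : show  ε (s/5 + (r2 - r1)) ≤ 2 u t
      have hx : (0:ℝ) ≤ r2 - r1 := by linarith
      have h4 : ε * (1/5 * (r1 + r2 + 2 * ε) + (r2 - r1)) ≤ 2 * (u * t) := by
        have hrhs : 0 ≤ ε * (1/5 * (r1 + r2 + 2 * ε) + (r2 - r1)) := by
          apply mul_nonneg hε.le; linarith
        have hsq : (ε * (1/5 * (r1 + r2 + 2 * ε) + (r2 - r1))) ^ 2 ≤ (2 * (u * t)) ^ 2 := by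
          rw [h2ut]
          linarith [mul_nonneg (mul_nonneg (mul_nonneg hε.le hε.le) hε.le) hε.le,
            mul_nonneg (mul_nonneg (mul_nonneg h1.le hε.le) hε.le) hε.le,
            mul_nonneg (mul_nonneg (mul_nonneg h1.le h1.le) hε.le) hε.le,
            mul_nonneg (mul_nonneg (mul_nonneg h1.le h1.le) h1.le) hε.le,
            mul_nonneg (mul_nonneg (mul_nonneg hx hε.le) hε.le) hε.le,
            mul_nonneg (mul_nonneg (mul_nonneg hx h1.le) hε.le) hε.le,
            mul_nonneg (mul_nonneg (mul_nonneg hx h1.le) h1.le) hε.le,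
            mul_nonneg (mul_nonneg (mul_nonneg hx hx) hε.le) hε.le,
            mul_nonneg (mul_nonneg (mul_nonneg hx hx) h1.le) hε.le]
        nlinarith [mul_nonneg hu.le ht]
      nlinarith
  constructor
  · rw [le_div_iff₀ hs]; nlinarith
  · rw [div_le_iff₀ hs]
    nlinarith [mul_pos hε hs]

private lemma aux19 (M r1 r2 ε : ℝ) (hM : 1 ≤ M) (h1 : 0 < r1) (h2 : 0 < r2)
    (hε : 0 < ε) (hmin : min r1 r2 ≤ M * ε) :
    1/5 * ε ≤ Real.sqrt ε * (2 * Real.sqrt (r1 * r2 * (r1 + r2)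
        + (r1 ^ 2 + r2 ^ 2 + 3 * r1 * r2) * ε + 2 * (r1 + r2) * ε ^ 2 + ε ^ 3)
        + Real.sqrt ε * (r1 - r2)) / (r1 + r2 + 2 * ε) ∧
    Real.sqrt ε * (2 * Real.sqrt (r1 * r2 * (r1 + r2)
        + (r1 ^ 2 + r2 ^ 2 + 3 * r1 * r2) * ε + 2 * (r1 + r2) * ε ^ 2 + ε ^ 3)
        + Real.sqrt ε * (r1 - r2)) / (r1 + r2 + 2 * ε) ≤ 3 * (M + 1) * ε := by
  have hD : 0 ≤ r1 * r2 * (r1 + r2) + (r1 ^ 2 + r2 ^ 2 + 3 * r1 * r2) * ε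
      + 2 * (r1 + r2) * ε ^ 2 + ε ^ 3 := by positivity
  exact core19 M r1 r2 ε _ _ hM h1 h2 hε hmin (Real.sqrt_nonneg _)
    (Real.sqrt_pos.mpr hε) (Real.sq_sqrt hε.le)
    (by rw [Real.sq_sqrt hD]; ring)

/-- In the regime `min {r1, r2} ≤ M ε`, both fixed points of the composed
circle inversions are at distance comparable to `ε` from the midpoint:
`p1 ∼ ε` and `-p2 ∼ ε`. -/
theorem stmt19 (M : ℝ) (hM : 1 ≤ M) :
    ∃ c > (0 : ℝ), ∃ C > (0 : ℝ), ∀ r1 r2 ε d p1 p2 : ℝ,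
      0 < r1 → 0 < r2 → 0 < ε →
      min r1 r2 ≤ M * ε →
      d = Real.sqrt (r1 * r2 * (r1 + r2) + (r1 ^ 2 + r2 ^ 2 + 3 * r1 * r2) * ε
        + 2 * (r1 + r2) * ε ^ 2 + ε ^ 3) →
      p1 = Real.sqrt ε * (2 * d + Real.sqrt ε * (r1 - r2)) / (r1 + r2 + 2 * ε) →
      p2 = -(Real.sqrt ε * (2 * d - Real.sqrt ε * (r1 - r2)) / (r1 + r2 + 2 * ε)) →
      (c * ε ≤ p1 ∧ p1 ≤ C * ε) ∧ (c * ε ≤ -p2 ∧ -p2 ≤ C * ε) := by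
  refine ⟨1/5, by norm_num, 3 * (M + 1), by nlinarith, ?_⟩
  intro r1 r2 ε d p1 p2 h1 h2 hε hmin hd hp1 hp2
  have H1 := aux19 M r1 r2 ε hM h1 h2 hε hmin
  have H2 := aux19 M r2 r1 ε hM h2 h1 hε (by rwa [min_comm])
  have e2 : -p2 = Real.sqrt ε * (2 * Real.sqrt (r2 * r1 * (r2 + r1)
      + (r2 ^ 2 + r1 ^ 2 + 3 * r2 * r1) * ε + 2 * (r2 + r1) * ε ^ 2 + ε ^ 3)
      + Real.sqrt ε * (r2 - r1)) / (r2 + r1 + 2 * ε) := by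
    rw [hp2, hd, neg_neg]
    have hr : r1 * r2 * (r1 + r2) + (r1 ^ 2 + r2 ^ 2 + 3 * r1 * r2) * ε
        + 2 * (r1 + r2) * ε ^ 2 + ε ^ 3 = r2 * r1 * (r2 + r1)
        + (r2 ^ 2 + r1 ^ 2 + 3 * r2 * r1) * ε + 2 * (r2 + r1) * ε ^ 2 + ε ^ 3 := by ring
    rw [hr]
    rw [show r1 + r2 + 2 * ε = r2 + r1 + 2 * ε from by ring]
    ring_nf
  constructor
  · rw [hp1, hd]; exact ⟨H1.1, H1.2⟩
  · rw [e2]; exact ⟨H2.1, H2.2⟩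
end
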